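/- For z > 0 define φ(z) = (exp(z/2) − 1)²/z. Then φ is strictly increasing on (0, ∞). Equivalently, in terms of M = exp(z) > 1, the per-bit amplifier-power factor ((√M − 1)²)/ln(M) is strictly increasing in M for M > 1. -/

import Mathlib

/-!
The factor `(exp t - 1) / t` is the slope of the secant of `exp` between `0` and `t`, hence
strictly increasing by strict convexity of `exp`; multiplying it by the positive increasing factor
`exp t - 1` gives `(exp t - 1)² / t`, and `φ z` is half of this at `t = z / 2`. The second claim
is the first one composed with `log`, since `√M = exp (log M / 2)`.
-/

open Real Set

theorem strictMonoOn_exp_sub_one_div : StrictMonoOn (fun t : ℝ => (exp t - 1) / t) {0}ᶜ := by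
  intro x hx y hy hxy
  simpa using strictConvexOn_exp.secant_strict_mono (mem_univ 0) (mem_univ x) (mem_univ y) hx hy hxy

theorem strictMonoOn_exp_sub_one_sq_div : StrictMonoOn (fun t : ℝ => (exp t - 1) ^ 2 / t) (Ioi 0) := by
  intro x (hx : 0 < x) y (hy : 0 < y) hxy
  have hpos : 0 < exp x - 1 := by linarith [add_one_lt_exp hx.ne']
  have hfactor : exp x - 1 < exp y - 1 := by gcongr
  have hslope : (exp x - 1) / x < (exp y - 1) / y :=
    strictMonoOn_exp_sub_one_div hx.ne' hy.ne' hxy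
  calc (exp x - 1) ^ 2 / x = (exp x - 1) * ((exp x - 1) / x) := by ring
    _ < (exp y - 1) * ((exp y - 1) / y) :=
        mul_lt_mul'' hfactor hslope hpos.le (div_pos hpos hx).le
    _ = (exp y - 1) ^ 2 / y := by ring

theorem strictMonoOn_exp_half_sub_one_sq_div :
    StrictMonoOn (fun z : ℝ => (exp (z / 2) - 1) ^ 2 / z) (Ioi 0) := by
  intro x (hx : 0 < x) y (hy : 0 < y) hxy
  have half_form (z : ℝ) : (exp (z / 2) - 1) ^ 2 / z = (exp (z / 2) - 1) ^ 2 / (z / 2) / 2 := by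
    rw [div_div, div_mul_cancel₀ z two_ne_zero]
  simp only [half_form]
  exact div_lt_div_of_pos_right
    (strictMonoOn_exp_sub_one_sq_div (half_pos hx) (half_pos hy) (by linarith)) two_pos

theorem sqrt_eq_exp_log_div_two {M : ℝ} (hM : 0 < M) : √M = exp (log M / 2) := by
  rw [sqrt_eq_rpow, rpow_def_of_pos hM, mul_one_div]

/-- `φ(z) = (exp(z/2) − 1)²/z` is strictly increasing on `(0,∞)`; equivalently
`M ↦ (√M − 1)²/ln M` is strictly increasing on `(1,∞)`. -/
theorem amp_power_factor_strictMono :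
    StrictMonoOn (fun z : ℝ => (Real.exp (z / 2) - 1) ^ 2 / z) (Set.Ioi 0) ∧
    StrictMonoOn (fun M : ℝ => (Real.sqrt M - 1) ^ 2 / Real.log M) (Set.Ioi 1) := by
  refine ⟨strictMonoOn_exp_half_sub_one_sq_div, ?_⟩
  have hlog : StrictMonoOn log (Ioi 1) := strictMonoOn_log.mono (Ioi_subset_Ioi zero_le_one)
  refine (strictMonoOn_exp_half_sub_one_sq_div.comp hlog fun _ hM => log_pos hM).congr ?_
  intro M (hM : 1 < M)
  simp only [Function.comp_apply, sqrt_eq_exp_log_div_two (zero_lt_one.trans hM)]
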